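/- For every k ∈ [1:K], the zero-padded MOSES iterate Ŷ_{k,r} ∈ ℝ^{n×Kb} satisfies Ŷ_{k,r} = Y_K P_{Q̂_{k,r}}, where Q̂_{k,r} = span(Ŷ_{k,r}*) is the row space of Ŷ_{k,r}; equivalently, Ŷ_{k−1,r} + Y_k P_{I_k} = Y_K P_{Q̃_k}, where Q̃_k = Q̂_{k−1,r} ⊕ I_k. In particular the MOSES update rule can be written as Y_K P_{Q̂_{k,r}} = SVD_r(Y_K P_{Q̃_k}) for k ∈ [2:K]. Moreover, the inclusions Q̂_{k,r} ⊆ Q̃_k ⊆ J_k hold, where J_k = I_1 ⊕ … ⊕ I_k. -/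

import Mathlib

open MeasureTheory ProbabilityTheory Matrix

noncomputable def frobNorm {n m : ℕ} (A : Matrix (Fin n) (Fin m) ℝ) : ℝ :=
  Real.sqrt (∑ i, ∑ j, (A i j) ^ 2)

noncomputable def frobInner {n m : ℕ} (A B : Matrix (Fin n) (Fin m) ℝ) : ℝ :=
  ∑ i, ∑ j, A i j * B i j

noncomputable def specNorm {n m : ℕ} (A : Matrix (Fin n) (Fin m) ℝ) : ℝ :=
  ‖LinearMap.toContinuousLinearMap (Matrix.toEuclideanLin A)‖

noncomputable def singularValue {n m : ℕ} (A : Matrix (Fin n) (Fin m) ℝ) (i : Fin n) : ℝ :=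
  Real.sqrt ((Matrix.isHermitian_mul_conjTranspose_self A).eigenvalues
    (Tuple.sort (Matrix.isHermitian_mul_conjTranspose_self A).eigenvalues i.rev))

noncomputable def residualSq {n m : ℕ} (r : ℕ) (A : Matrix (Fin n) (Fin m) ℝ) : ℝ :=
  ∑ i : Fin n, if r ≤ (i : ℕ) then (singularValue A i) ^ 2 else 0

def IsTruncSVD {n m : ℕ} (r : ℕ) (A Ar : Matrix (Fin n) (Fin m) ℝ) : Prop :=
  Ar.rank ≤ r ∧ ∀ B : Matrix (Fin n) (Fin m) ℝ, B.rank ≤ r →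
    frobNorm (A - Ar) ≤ frobNorm (A - B)

noncomputable def colSpan {n m : ℕ} (A : Matrix (Fin n) (Fin m) ℝ) :
    Submodule ℝ (EuclideanSpace ℝ (Fin n)) :=
  Submodule.span ℝ (Set.range fun j : Fin m =>
    ((WithLp.equiv 2 (Fin n → ℝ)).symm fun i => A i j))

noncomputable def rowSpan {n m : ℕ} (A : Matrix (Fin n) (Fin m) ℝ) :
    Submodule ℝ (EuclideanSpace ℝ (Fin m)) := colSpan Aᵀ

noncomputable def projMatrix {n : ℕ} (U : Submodule ℝ (EuclideanSpace ℝ (Fin n))) :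
    Matrix (Fin n) (Fin n) ℝ :=
  Matrix.of fun i j =>
    (U.orthogonalProjection (EuclideanSpace.single j 1) : EuclideanSpace ℝ (Fin n)) i

noncomputable def coordSubspace {M : ℕ} (s t : ℕ) : Submodule ℝ (EuclideanSpace ℝ (Fin M)) :=
  Submodule.span ℝ ((fun j : Fin M => (EuclideanSpace.single j (1:ℝ))) ''
    {j : Fin M | s ≤ (j : ℕ) ∧ (j : ℕ) < t})

def padTrunc {n M : ℕ} (A : Matrix (Fin n) (Fin M) ℝ) (m : ℕ) :
    Matrix (Fin n) (Fin M) ℝ :=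
  Matrix.of fun i j => if (j : ℕ) < m then A i j else 0

def IsMOSES {n M : ℕ} (r b K : ℕ) (Y : Matrix (Fin n) (Fin M) ℝ)
    (Yhat : ℕ → Matrix (Fin n) (Fin M) ℝ) : Prop :=
  Yhat 0 = 0 ∧ ∀ k, 1 ≤ k → k ≤ K →
    IsTruncSVD r (Yhat (k - 1) + (padTrunc Y (k * b) - padTrunc Y ((k - 1) * b))) (Yhat k)

noncomputable def stdGaussianSeq (n m : ℕ) : Measure (Fin n → Fin m → ℝ) :=
  Measure.pi fun _ => Measure.pi fun _ => gaussianReal 0 1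

noncomputable def gaussianOfRoot {n : ℕ} (A : Matrix (Fin n) (Fin n) ℝ) :
    Measure (EuclideanSpace ℝ (Fin n)) :=
  (Measure.pi fun _ : Fin n => gaussianReal 0 1).map
    (fun g => (WithLp.equiv 2 (Fin n → ℝ)).symm (A.mulVec g))

/-!
Right multiplication by `projMatrix U` projects every row orthogonally onto `U`. Two Pythagorean
arguments control a best rank-`r` approximation `Ar` of `A`: projecting `Ar` onto a subspace that
contains the rows of `A` cannot increase the error, so the rows of `Ar` stay in that subspace; and
`A * projMatrix (rowSpan Ar)` is a competitor of rank at most `r`, so it equals `Ar`.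
By induction on `k`, the row space of `Ŷ_k` lies in `J_k`, which is orthogonal to the next block
`I_{k+1}`; hence `P_{Q̂_k ⊕ I_{k+1}} = P_{Q̂_k} + P_{I_{k+1}}`, the MOSES input
`Ŷ_k + Y P_{I_{k+1}}` is `Y P_{Q̃_{k+1}}`, and both facts apply to it.
-/

open Module

section OrthogonalProjection

variable {E : Type*} [NormedAddCommGroup E] [InnerProductSpace ℝ E]

lemma Submodule.IsOrtho.starProjection_sup_apply {U V : Submodule ℝ E} (h : U ⟂ V)
    [U.HasOrthogonalProjection] [V.HasOrthogonalProjection] [(U ⊔ V).HasOrthogonalProjection]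
    (v : E) : (U ⊔ V).starProjection v = U.starProjection v + V.starProjection v := by
  refine Submodule.eq_starProjection_of_mem_orthogonal
    (Submodule.add_mem_sup (U.starProjection_apply_mem v) (V.starProjection_apply_mem v)) ?_
  rw [← Submodule.inf_orthogonal]
  constructor
  · simpa [sub_add_eq_sub_sub] using Submodule.sub_mem _
      (U.sub_starProjection_mem_orthogonal v) (h.symm.le (V.starProjection_apply_mem v))
  · simpa [sub_add_eq_sub_sub_swap] using Submodule.sub_mem _
      (V.sub_starProjection_mem_orthogonal v) (h.le (U.starProjection_apply_mem v))

end OrthogonalProjection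

section ProjMatrix

variable {n m : ℕ}

lemma toLp_mul_projMatrix (X : Matrix (Fin n) (Fin m) ℝ)
    (U : Submodule ℝ (EuclideanSpace ℝ (Fin m))) (i : Fin n) :
    WithLp.toLp 2 ((X * projMatrix U) i) = U.starProjection (WithLp.toLp 2 (X i)) := by
  ext k
  calc (X * projMatrix U) i k
      = inner ℝ (U.starProjection (EuclideanSpace.single k 1)) (WithLp.toLp 2 (X i)) := by
        simp [Matrix.mul_apply, projMatrix, PiLp.inner_apply]
    _ = inner ℝ (EuclideanSpace.single k 1) (U.starProjection (WithLp.toLp 2 (X i))) :=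
        U.starProjection_isSymmetric _ _
    _ = _ := by simp [EuclideanSpace.inner_single_left]

lemma Matrix.ext_toLp_row {X X' : Matrix (Fin n) (Fin m) ℝ}
    (h : ∀ i, WithLp.toLp 2 (X i) = WithLp.toLp 2 (X' i)) : X = X' :=
  funext fun i => WithLp.toLp_injective 2 (h i)

lemma mul_projMatrix_mul_projMatrix_of_le {U V : Submodule ℝ (EuclideanSpace ℝ (Fin m))}
    (h : U ≤ V) (X : Matrix (Fin n) (Fin m) ℝ) :
    X * projMatrix V * projMatrix U = X * projMatrix U :=
  Matrix.ext_toLp_row fun i => by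
    rw [toLp_mul_projMatrix, toLp_mul_projMatrix, toLp_mul_projMatrix,
      ← ContinuousLinearMap.comp_apply, Submodule.starProjection_comp_starProjection_of_le h]

lemma mul_projMatrix_sup {U V : Submodule ℝ (EuclideanSpace ℝ (Fin m))} (h : U ⟂ V)
    (X : Matrix (Fin n) (Fin m) ℝ) :
    X * projMatrix (U ⊔ V) = X * projMatrix U + X * projMatrix V :=
  Matrix.ext_toLp_row fun i => by
    rw [toLp_mul_projMatrix, h.starProjection_sup_apply, ← toLp_mul_projMatrix,
      ← toLp_mul_projMatrix]
    rfl

lemma rowSpan_eq_span (X : Matrix (Fin n) (Fin m) ℝ) :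
    rowSpan X = Submodule.span ℝ (Set.range fun i => WithLp.toLp 2 (X i)) := rfl

lemma rowSpan_le_iff {X : Matrix (Fin n) (Fin m) ℝ} {U : Submodule ℝ (EuclideanSpace ℝ (Fin m))} :
    rowSpan X ≤ U ↔ X * projMatrix U = X := by
  simp only [rowSpan_eq_span, Submodule.span_le, Set.range_subset_iff, SetLike.mem_coe,
    ← Submodule.starProjection_eq_self_iff, ← toLp_mul_projMatrix]
  exact ⟨Matrix.ext_toLp_row, fun h i => by rw [h]⟩

lemma rowSpan_mul_projMatrix_le (X : Matrix (Fin n) (Fin m) ℝ)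
    (U : Submodule ℝ (EuclideanSpace ℝ (Fin m))) : rowSpan (X * projMatrix U) ≤ U :=
  rowSpan_le_iff.2 (mul_projMatrix_mul_projMatrix_of_le le_rfl X)

lemma rowSpan_zero : rowSpan (0 : Matrix (Fin n) (Fin m) ℝ) = ⊥ :=
  Submodule.span_eq_bot.2 (by rintro _ ⟨i, rfl⟩; rfl)

lemma projMatrix_bot : projMatrix (⊥ : Submodule ℝ (EuclideanSpace ℝ (Fin m))) = 0 := by
  ext
  simp [projMatrix]

lemma finrank_rowSpan (X : Matrix (Fin n) (Fin m) ℝ) : finrank ℝ (rowSpan X) = X.rank := by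
  rw [← Matrix.rank_transpose, Matrix.rank, Matrix.range_mulVecLin, rowSpan_eq_span,
    ← LinearEquiv.finrank_map_eq (WithLp.linearEquiv 2 ℝ (Fin m → ℝ)), Submodule.map_span,
    ← Set.range_comp]
  rfl

lemma rank_mul_projMatrix_le (X : Matrix (Fin n) (Fin m) ℝ)
    (U : Submodule ℝ (EuclideanSpace ℝ (Fin m))) : (X * projMatrix U).rank ≤ finrank ℝ U := by
  rw [← finrank_rowSpan]
  exact Submodule.finrank_mono (rowSpan_mul_projMatrix_le X U)

end ProjMatrix

section Frobenius

variable {n m : ℕ}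

lemma frobNorm_sq (X : Matrix (Fin n) (Fin m) ℝ) :
    frobNorm X ^ 2 = ∑ i, ‖WithLp.toLp 2 (X i)‖ ^ 2 := by
  rw [frobNorm, Real.sq_sqrt (by positivity)]
  simp [EuclideanSpace.norm_sq_eq]

lemma frobNorm_nonneg (X : Matrix (Fin n) (Fin m) ℝ) : 0 ≤ frobNorm X := Real.sqrt_nonneg _

lemma frobNorm_eq_zero {X : Matrix (Fin n) (Fin m) ℝ} : frobNorm X = 0 ↔ X = 0 := by
  rw [← pow_eq_zero_iff two_ne_zero, frobNorm_sq,
    Finset.sum_eq_zero_iff_of_nonneg fun _ _ => by positivity]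
  simp only [Finset.mem_univ, true_implies, sq_eq_zero_iff, norm_eq_zero]
  exact ⟨Matrix.ext_toLp_row, fun h i => by rw [h]; rfl⟩

lemma frobNorm_sq_eq_add (X : Matrix (Fin n) (Fin m) ℝ)
    (U : Submodule ℝ (EuclideanSpace ℝ (Fin m))) :
    frobNorm X ^ 2 = frobNorm (X * projMatrix U) ^ 2 + frobNorm (X - X * projMatrix U) ^ 2 := by
  simp only [frobNorm_sq, ← Finset.sum_add_distrib]
  refine Finset.sum_congr rfl fun i _ => ?_
  rw [toLp_mul_projMatrix, Submodule.norm_sq_eq_add_norm_sq_starProjection _ U,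
    Submodule.starProjection_orthogonal_val, ← toLp_mul_projMatrix]
  rfl

lemma mul_projMatrix_eq_self_of_frobNorm_le {X : Matrix (Fin n) (Fin m) ℝ}
    {U : Submodule ℝ (EuclideanSpace ℝ (Fin m))} (h : frobNorm X ≤ frobNorm (X * projMatrix U)) :
    X * projMatrix U = X := by
  have hsq := frobNorm_sq_eq_add X U
  have : frobNorm (X - X * projMatrix U) = 0 := by
    nlinarith [frobNorm_nonneg X, frobNorm_nonneg (X - X * projMatrix U)]
  exact (sub_eq_zero.1 (frobNorm_eq_zero.1 this)).symm

lemma mul_projMatrix_eq_zero_of_frobNorm_le {X : Matrix (Fin n) (Fin m) ℝ}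
    {U : Submodule ℝ (EuclideanSpace ℝ (Fin m))}
    (h : frobNorm X ≤ frobNorm (X - X * projMatrix U)) : X * projMatrix U = 0 := by
  have hsq := frobNorm_sq_eq_add X U
  have : frobNorm (X * projMatrix U) = 0 := by
    nlinarith [frobNorm_nonneg X, frobNorm_nonneg (X * projMatrix U)]
  exact frobNorm_eq_zero.1 this

end Frobenius

namespace IsTruncSVD

variable {n m r : ℕ} {A Ar : Matrix (Fin n) (Fin m) ℝ}

lemma rowSpan_le (h : IsTruncSVD r A Ar) {U : Submodule ℝ (EuclideanSpace ℝ (Fin m))}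
    (hA : rowSpan A ≤ U) : rowSpan Ar ≤ U := by
  rw [rowSpan_le_iff] at hA ⊢
  have hproj : A - Ar * projMatrix U = (A - Ar) * projMatrix U := by rw [Matrix.sub_mul, hA]
  have hmin := h.2 (Ar * projMatrix U) ((Matrix.rank_mul_le_left _ _).trans h.1)
  rw [hproj] at hmin
  have := mul_projMatrix_eq_self_of_frobNorm_le hmin
  rwa [← hproj, sub_right_inj] at this

lemma mul_projMatrix_rowSpan (h : IsTruncSVD r A Ar) : A * projMatrix (rowSpan Ar) = Ar := by
  have hAr : Ar * projMatrix (rowSpan Ar) = Ar := rowSpan_le_iff.1 le_rfl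
  have hrank := (rank_mul_projMatrix_le A (rowSpan Ar)).trans ((finrank_rowSpan Ar).trans_le h.1)
  have hmin := h.2 _ hrank
  rw [show A - A * projMatrix (rowSpan Ar)
      = (A - Ar) - (A - Ar) * projMatrix (rowSpan Ar) by rw [Matrix.sub_mul, hAr]; abel] at hmin
  have := mul_projMatrix_eq_zero_of_frobNorm_le hmin
  rwa [Matrix.sub_mul, hAr, sub_eq_zero] at this

end IsTruncSVD

section CoordSubspace

/- `(M := M)` fixes the dimension before a product with `projMatrix (coordSubspace _ _)` is
elaborated; otherwise Lean picks the (defeq) `CStarMatrix` multiplication instance. -/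

variable {n M : ℕ}

lemma mem_coordSubspace_iff {s t : ℕ} {v : EuclideanSpace ℝ (Fin M)} :
    v ∈ coordSubspace s t ↔ ∀ j : Fin M, v j ≠ 0 → s ≤ (j : ℕ) ∧ (j : ℕ) < t := by
  have hb : (fun j : Fin M => EuclideanSpace.single j (1 : ℝ))
      = ⇑(EuclideanSpace.basisFun (Fin M) ℝ).toBasis := by
    ext1 j; simp
  rw [coordSubspace, hb, Basis.mem_span_image]
  simp [Set.subset_def]

lemma starProjection_coordSubspace_apply (s t : ℕ) (v : EuclideanSpace ℝ (Fin M)) (j : Fin M) :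
    (coordSubspace s t).starProjection v j = if s ≤ (j : ℕ) ∧ (j : ℕ) < t then v j else 0 := by
  suffices (coordSubspace s t).starProjection v
      = WithLp.toLp 2 fun j : Fin M => if s ≤ (j : ℕ) ∧ (j : ℕ) < t then v j else 0 by
    rw [this]
  refine Submodule.eq_starProjection_of_mem_of_inner_eq_zero
    (mem_coordSubspace_iff.2 fun j hj => ?_) fun w hw => ?_
  · by_contra hjt
    simp [hjt] at hj
  · rw [PiLp.inner_apply]
    refine Finset.sum_eq_zero fun j _ => ?_
    by_cases hjt : s ≤ (j : ℕ) ∧ (j : ℕ) < t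
    · simp [hjt]
    · have : w j = 0 := by_contra fun hw0 => hjt (mem_coordSubspace_iff.1 hw j hw0)
      simp [this]

lemma mul_projMatrix_coordSubspace_apply (X : Matrix (Fin n) (Fin M) ℝ) (s t : ℕ)
    (i : Fin n) (j : Fin M) :
    (X * projMatrix (coordSubspace (M := M) s t)) i j =
      if s ≤ (j : ℕ) ∧ (j : ℕ) < t then X i j else 0 :=
  (congrArg (fun w : EuclideanSpace ℝ (Fin M) => w j) (toLp_mul_projMatrix X _ i)).trans
    (starProjection_coordSubspace_apply s t _ j)

lemma padTrunc_sub_padTrunc (Y : Matrix (Fin n) (Fin M) ℝ) {a c : ℕ} (hac : a ≤ c) :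
    padTrunc Y c - padTrunc Y a = Y * projMatrix (coordSubspace (M := M) a c) := by
  ext i j
  rw [Matrix.sub_apply, mul_projMatrix_coordSubspace_apply]
  simp only [padTrunc, Matrix.of_apply]
  split_ifs <;> first | omega | simp

lemma padTrunc_mul_projMatrix_coordSubspace (Y : Matrix (Fin n) (Fin M) ℝ) (a c : ℕ) :
    padTrunc Y c * projMatrix (coordSubspace (M := M) a c) =
      Y * projMatrix (coordSubspace (M := M) a c) := by
  ext i j
  rw [mul_projMatrix_coordSubspace_apply, mul_projMatrix_coordSubspace_apply]
  simp only [padTrunc, Matrix.of_apply]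
  split_ifs <;> first | rfl | omega

lemma coordSubspace_mono {s t s' t' : ℕ} (hs : s' ≤ s) (ht : t ≤ t') :
    coordSubspace (M := M) s t ≤ coordSubspace s' t' :=
  fun _ hv => mem_coordSubspace_iff.2 fun j hj => by
    have := mem_coordSubspace_iff.1 hv j hj
    omega

lemma coordSubspace_isOrtho {s t s' t' : ℕ} (h : t ≤ s') :
    coordSubspace (M := M) s t ⟂ coordSubspace s' t' := by
  rw [Submodule.isOrtho_iff_inner_eq]
  intro u hu v hv
  rw [PiLp.inner_apply]
  refine Finset.sum_eq_zero fun j _ => ?_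
  by_cases huj : u j = 0
  · simp [huj]
  by_cases hvj : v j = 0
  · simp [hvj]
  have := mem_coordSubspace_iff.1 hu j huj
  have := mem_coordSubspace_iff.1 hv j hvj
  omega

end CoordSubspace

section MOSES

variable {n M r b K : ℕ} {Y : Matrix (Fin n) (Fin M) ℝ}

lemma sup_coordSubspace_le {U : Submodule ℝ (EuclideanSpace ℝ (Fin M))} {a c : ℕ}
    (hU : U ≤ coordSubspace 0 a) (hac : a ≤ c) : U ⊔ coordSubspace a c ≤ coordSubspace 0 c :=
  sup_le (hU.trans (coordSubspace_mono le_rfl hac)) (coordSubspace_mono (Nat.zero_le a) le_rfl)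

lemma add_mul_projMatrix_coordSubspace {X : Matrix (Fin n) (Fin M) ℝ} {a : ℕ} (c : ℕ)
    (hX : X = Y * projMatrix (rowSpan X)) (hXa : rowSpan X ≤ coordSubspace 0 a) :
    X + Y * projMatrix (coordSubspace (M := M) a c) =
      Y * projMatrix (rowSpan X ⊔ coordSubspace a c) := by
  rw [mul_projMatrix_sup ((coordSubspace_isOrtho le_rfl).mono_left hXa), ← hX]

lemma IsTruncSVD.rowSpan_le_and_eq_mul_projMatrix {V : Submodule ℝ (EuclideanSpace ℝ (Fin M))}
    {Ar : Matrix (Fin n) (Fin M) ℝ} (h : IsTruncSVD r (Y * projMatrix V) Ar) :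
    rowSpan Ar ≤ V ∧ Ar = Y * projMatrix (rowSpan Ar) := by
  have hle := h.rowSpan_le (rowSpan_mul_projMatrix_le Y V)
  exact ⟨hle, h.mul_projMatrix_rowSpan.symm.trans (mul_projMatrix_mul_projMatrix_of_le hle Y)⟩

variable {Yhat : ℕ → Matrix (Fin n) (Fin M) ℝ}

lemma IsMOSES.isTruncSVD_succ (h : IsMOSES r b K Y Yhat) {m : ℕ} (hm : m + 1 ≤ K)
    (hY : Yhat m = Y * projMatrix (rowSpan (Yhat m)))
    (hJ : rowSpan (Yhat m) ≤ coordSubspace 0 (m * b)) :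
    IsTruncSVD r (Y * projMatrix (rowSpan (Yhat m) ⊔ coordSubspace (m * b) ((m + 1) * b)))
      (Yhat (m + 1)) := by
  have := h.2 (m + 1) (Nat.le_add_left 1 m) hm
  rwa [Nat.add_sub_cancel, padTrunc_sub_padTrunc Y (Nat.mul_le_mul_right b m.le_succ),
    add_mul_projMatrix_coordSubspace _ hY hJ] at this

lemma IsMOSES.eq_mul_projMatrix_and_rowSpan_le (h : IsMOSES r b K Y Yhat) :
    ∀ k ≤ K, Yhat k = Y * projMatrix (rowSpan (Yhat k)) ∧
      rowSpan (Yhat k) ≤ coordSubspace 0 (k * b)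
  | 0, _ => by simp [h.1, rowSpan_zero, projMatrix_bot]
  | m + 1, hm => by
    obtain ⟨hY, hJ⟩ := h.eq_mul_projMatrix_and_rowSpan_le m (Nat.le_of_succ_le hm)
    obtain ⟨hle, hYhat⟩ := (h.isTruncSVD_succ hm hY hJ).rowSpan_le_and_eq_mul_projMatrix
    exact ⟨hYhat, hle.trans (sup_coordSubspace_le hJ (Nat.mul_le_mul_right b m.le_succ))⟩

end MOSES

theorem stmt7_general (n M r b K : ℕ)
    (Y : Matrix (Fin n) (Fin M) ℝ)
    (Yhat : ℕ → Matrix (Fin n) (Fin M) ℝ) (hmoses : IsMOSES r b K Y Yhat) :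
    ∀ k, 1 ≤ k → k ≤ K →
      Yhat k = Y * projMatrix (rowSpan (Yhat k)) ∧
      Yhat (k - 1) + padTrunc Y (k * b) * projMatrix (coordSubspace ((k - 1) * b) (k * b)) =
        Y * projMatrix (rowSpan (Yhat (k - 1)) ⊔ coordSubspace ((k - 1) * b) (k * b)) ∧
      (2 ≤ k → IsTruncSVD r
        (Y * projMatrix (rowSpan (Yhat (k - 1)) ⊔ coordSubspace ((k - 1) * b) (k * b)))
        (Y * projMatrix (rowSpan (Yhat k)))) ∧
      rowSpan (Yhat k) ≤ rowSpan (Yhat (k - 1)) ⊔ coordSubspace ((k - 1) * b) (k * b) ∧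
      rowSpan (Yhat (k - 1)) ⊔ coordSubspace ((k - 1) * b) (k * b) ≤
        coordSubspace 0 (k * b) := by
  rintro k hk hkK
  obtain ⟨m, rfl⟩ : ∃ m, k = m + 1 := ⟨k - 1, (Nat.sub_add_cancel hk).symm⟩
  rw [Nat.add_sub_cancel]
  obtain ⟨hY, hJ⟩ := hmoses.eq_mul_projMatrix_and_rowSpan_le m (Nat.le_of_succ_le hkK)
  have hsvd := hmoses.isTruncSVD_succ hkK hY hJ
  obtain ⟨hle, hYhat⟩ := hsvd.rowSpan_le_and_eq_mul_projMatrix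
  refine ⟨hYhat, ?_, fun _ => hYhat ▸ hsvd, hle,
    sup_coordSubspace_le hJ (Nat.mul_le_mul_right b m.le_succ)⟩
  -- `exact`, not `rw`: the statement elaborates this product with the `CStarMatrix` instance.
  exact (congrArg (Yhat m + ·) (padTrunc_mul_projMatrix_coordSubspace Y _ _)).trans
    (add_mul_projMatrix_coordSubspace _ hY hJ)

/-- with the zero-padded MOSES iterates `Ŷ_{k,r} ∈ ℝ^{n×Kb}`,
row spaces `Q̂_{k,r} = span(Ŷ_{k,r}*)`, coordinate subspaces `I_k` (coordinates
`(k−1)b+1 … kb`), `J_k = I_1 ⊕ … ⊕ I_k`, and `Q̃_k = Q̂_{k−1,r} ⊕ I_k`, for every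
`k ∈ [1:K]`: `Ŷ_{k,r} = Y_K P_{Q̂_{k,r}}`; equivalently
`Ŷ_{k−1,r} + Y_k P_{I_k} = Y_K P_{Q̃_k}`; the update rule can be written as
`Y_K P_{Q̂_{k,r}} = SVD_r(Y_K P_{Q̃_k})` for `k ∈ [2:K]`; and `Q̂_{k,r} ⊆ Q̃_k ⊆ J_k`. -/
theorem stmt7 (n M r b K : ℕ) (hM : M = K * b)
    (Y : Matrix (Fin n) (Fin M) ℝ)
    (Yhat : ℕ → Matrix (Fin n) (Fin M) ℝ) (hmoses : IsMOSES r b K Y Yhat) :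
    ∀ k, 1 ≤ k → k ≤ K →
      Yhat k = Y * projMatrix (rowSpan (Yhat k)) ∧
      Yhat (k - 1) + padTrunc Y (k * b) * projMatrix (coordSubspace ((k - 1) * b) (k * b)) =
        Y * projMatrix (rowSpan (Yhat (k - 1)) ⊔ coordSubspace ((k - 1) * b) (k * b)) ∧
      (2 ≤ k → IsTruncSVD r
        (Y * projMatrix (rowSpan (Yhat (k - 1)) ⊔ coordSubspace ((k - 1) * b) (k * b)))
        (Y * projMatrix (rowSpan (Yhat k)))) ∧
      rowSpan (Yhat k) ≤ rowSpan (Yhat (k - 1)) ⊔ coordSubspace ((k - 1) * b) (k * b) ∧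
      rowSpan (Yhat (k - 1)) ⊔ coordSubspace ((k - 1) * b) (k * b) ≤
        coordSubspace 0 (k * b) :=
  stmt7_general n M r b K Y Yhat hmoses
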